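/- arXiv:q-alg/9607003 — 3 statements merged into one kernel-verified Lean document; each statement's English description precedes it below -/
import Mathlib

section
/- For every ν in the cone Λ, the c-functions C₊^{qR}(ν) and C₋^{qR}(ν) are well-defined and nonzero as meromorphic expressions in the parameters t, t₀, t₁, t₂, t₃ and q (no factor in their numerators or denominators is identically zero). Moreover, for every ν in the alcove Λ_N they are well-defined and nonzero as meromorphic expressions in the parameters subject to the truncation condition t_a t_b t^{n−1} = q^{−N}, i.e. after eliminating t_b via t_a t_b = t^{1−n} q^{−N} the resulting expressions in the remaining parameters are well defined and nonzero. -/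
open scoped BigOperators Classical

noncomputable section

namespace QR

/-- q-shifted factorial `(a;q)_m`. -/
def qPoch (q a : ℂ) (m : ℕ) : ℂ := ∏ i ∈ Finset.range m, (1 - a * q ^ i)

/-- dominance: weakly decreasing vector of nonnegative integers. -/
def isDominant {n : ℕ} (ν : Fin n → ℕ) : Prop := ∀ i j : Fin n, i ≤ j → ν j ≤ ν i

/-- the alcove `Λ_N` of dominant weights with entries at most `N`. -/
def alcove (n N : ℕ) : Finset (Fin n → ℕ) :=
  ((Finset.univ : Finset (Fin n → Fin (N + 1))).image fun ν i => (ν i : ℕ)).filter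
    fun ν => isDominant ν

/-- dominance partial order on weights. -/
def domLE {n : ℕ} (μ lam : Fin n → ℕ) : Prop :=
  ∀ k : Fin n, ∑ j ∈ Finset.univ.filter (· ≤ k), μ j ≤ ∑ j ∈ Finset.univ.filter (· ≤ k), lam j

/-- the orbit of a dominant weight under permutations and sign flips. -/
def signedOrbit {n : ℕ} (lam : Fin n → ℕ) : Finset (Fin n → ℤ) :=
  Finset.image
    (fun pe : Equiv.Perm (Fin n) × (Fin n → Bool) =>
      fun i => if pe.2 i then (lam (pe.1 i) : ℤ) else -(lam (pe.1 i) : ℤ))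
    Finset.univ

/-- symmetrized monomial `m_λ`. -/
def mono {n : ℕ} (lam : Fin n → ℕ) (z : Fin n → ℂ) : ℂ :=
  ∑ μ ∈ signedOrbit lam, ∏ i, z i ^ μ i

/-- numerator of the coefficient `V_{ε j}` of Koornwinder's operator. -/
def VNum {n : ℕ} (t : ℂ) (T : Fin 4 → ℂ) (ε : ℤ) (j : Fin n) (z : Fin n → ℂ) : ℂ :=
  (∏ r, (1 - T r * z j ^ ε)) *
    ∏ k ∈ Finset.univ.erase j, ((1 - t * z j ^ ε * z k) * (1 - t * z j ^ ε * (z k)⁻¹))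

/-- denominator of the coefficient `V_{ε j}` of Koornwinder's operator. -/
def VDen {n : ℕ} (q : ℂ) (ε : ℤ) (j : Fin n) (z : Fin n → ℂ) : ℂ :=
  ((1 - z j ^ (2 * ε)) * (1 - q * z j ^ (2 * ε))) *
    ∏ k ∈ Finset.univ.erase j, ((1 - z j ^ ε * z k) * (1 - z j ^ ε * (z k)⁻¹))

/-- coefficient `V_{ε j}` of Koornwinder's operator. -/
def Vcoef {n : ℕ} (q t : ℂ) (T : Fin 4 → ℂ) (ε : ℤ) (j : Fin n) (z : Fin n → ℂ) : ℂ :=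
  VNum t T ε j z / VDen q ε j z

/-- Koornwinder's second order q-difference operator `D`. -/
def Dop {n : ℕ} (q t : ℂ) (T : Fin 4 → ℂ) (f : (Fin n → ℂ) → ℂ) (z : Fin n → ℂ) : ℂ :=
  ∑ j, (Vcoef q t T 1 j z * (f (Function.update z j (q * z j)) - f z)
      + Vcoef q t T (-1) j z * (f (Function.update z j (q⁻¹ * z j)) - f z))

/-- eigenvalue `E_{λ,λ}`. -/
def Eval {n : ℕ} (q t : ℂ) (T : Fin 4 → ℂ) (lam : Fin n → ℕ) : ℂ :=
  ∑ i : Fin n,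
    (q⁻¹ * (∏ r, T r) * t ^ (2 * n - (i : ℕ) - 2) * (q ^ lam i - 1)
      + t ^ (i : ℕ) * (q ^ (-(lam i : ℤ)) - 1))

/-- `p` is the monic multivariable Askey-Wilson polynomial attached to `lam`. -/
def IsAW {n : ℕ} (q t : ℂ) (T : Fin 4 → ℂ) (lam : Fin n → ℕ) (p : (Fin n → ℂ) → ℂ) : Prop :=
  (∃ c : (Fin n → ℕ) →₀ ℂ,
    (∀ μ ∈ c.support, isDominant μ ∧ domLE μ lam ∧ μ ≠ lam) ∧
    ∀ z : Fin n → ℂ, (∀ i, z i ≠ 0) →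
      p z = mono lam z + c.sum fun μ coef => coef * mono μ z) ∧
  ∀ z : Fin n → ℂ, (∀ i, z i ≠ 0) →
    (∀ j : Fin n, VDen q 1 j z ≠ 0 ∧ VDen q (-1) j z ≠ 0) →
    Dop q t T p z = Eval q t T lam * p z

/-- `τ_j = t^(n-j) t_a`. -/
def tauv (n : ℕ) (t ta : ℂ) (i : Fin n) : ℂ := t ^ (n - 1 - (i : ℕ)) * ta

/-- the grid point `τ q^ν`. -/
def gridZ (n : ℕ) (q t ta : ℂ) (ν : Fin n → ℕ) : Fin n → ℂ := fun i => tauv n t ta i * q ^ ν i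

/-- pairs `1 ≤ j < k ≤ n`. -/
def pairsF (n : ℕ) : Finset (Fin n × Fin n) := Finset.univ.filter fun p => p.1 < p.2

/-- the factor `c₀(ν)`, with `s` a chosen square root of `t₀t₁t₂t₃ q⁻¹`. -/
def c0fac {n : ℕ} (t s : ℂ) (ν : Fin n → ℕ) : ℂ := ∏ i : Fin n, (t ^ (n - 1 - (i : ℕ)) * s) ^ ν i

/-- the square `c₀(ν)²` (a rational expression in the parameters). -/
def c0sq {n : ℕ} (q t : ℂ) (T : Fin 4 → ℂ) (ν : Fin n → ℕ) : ℂ :=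
  ∏ i : Fin n, ((t ^ (n - 1 - (i : ℕ))) ^ 2 * (∏ r, T r) * q⁻¹) ^ ν i

/-- numerator of `C₊^{qR}(ν)` apart from the factor `c₀(ν)`. -/
def CpN (n : ℕ) (q t ta : ℂ) (ν : Fin n → ℕ) : ℂ :=
  (∏ p ∈ pairsF n,
      qPoch q (tauv n t ta p.1 * tauv n t ta p.2) (ν p.1 + ν p.2) *
        qPoch q (tauv n t ta p.1 * (tauv n t ta p.2)⁻¹) (ν p.1 - ν p.2)) *
    ∏ i, qPoch q (tauv n t ta i ^ 2) (2 * ν i)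

/-- denominator of `C₊^{qR}(ν)`. -/
def CpD (n : ℕ) (q t ta : ℂ) (T : Fin 4 → ℂ) (ν : Fin n → ℕ) : ℂ :=
  (∏ p ∈ pairsF n,
      qPoch q (t * tauv n t ta p.1 * tauv n t ta p.2) (ν p.1 + ν p.2) *
        qPoch q (t * tauv n t ta p.1 * (tauv n t ta p.2)⁻¹) (ν p.1 - ν p.2)) *
    ∏ i, ∏ r, qPoch q (T r * tauv n t ta i) (ν i)

/-- numerator of `C₋^{qR}(ν)` apart from the factor `c₀(ν)`. -/
def CmN (n : ℕ) (q t ta : ℂ) (T : Fin 4 → ℂ) (ν : Fin n → ℕ) : ℂ :=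
  (∏ p ∈ pairsF n,
      qPoch q (t⁻¹ * q * tauv n t ta p.1 * tauv n t ta p.2) (ν p.1 + ν p.2) *
        qPoch q (t⁻¹ * q * tauv n t ta p.1 * (tauv n t ta p.2)⁻¹) (ν p.1 - ν p.2)) *
    ∏ i, ∏ r, qPoch q ((T r)⁻¹ * q * tauv n t ta i) (ν i)

/-- denominator of `C₋^{qR}(ν)`. -/
def CmD (n : ℕ) (q t ta : ℂ) (ν : Fin n → ℕ) : ℂ :=
  (∏ p ∈ pairsF n,
      qPoch q (q * tauv n t ta p.1 * tauv n t ta p.2) (ν p.1 + ν p.2) *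
        qPoch q (q * tauv n t ta p.1 * (tauv n t ta p.2)⁻¹) (ν p.1 - ν p.2)) *
    ∏ i, qPoch q (q * tauv n t ta i ^ 2) (2 * ν i)

/-- `C₊^{qR}(ν)` (depends on the chosen square root `s`). -/
def Cplus (n : ℕ) (q t ta s : ℂ) (T : Fin 4 → ℂ) (ν : Fin n → ℕ) : ℂ :=
  c0fac t s ν * CpN n q t ta ν / CpD n q t ta T ν

/-- `C₋^{qR}(ν)` (depends on the chosen square root `s`). -/
def Cminus (n : ℕ) (q t ta s : ℂ) (T : Fin 4 → ℂ) (ν : Fin n → ℕ) : ℂ :=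
  c0fac t s ν * CmN n q t ta T ν / CmD n q t ta ν

/-- the discrete weight `Δ^{qR}(ν) = 1/(C₊^{qR}(ν) C₋^{qR}(ν))`, a rational expression. -/
def weightQR (n : ℕ) (q t ta : ℂ) (T : Fin 4 → ℂ) (ν : Fin n → ℕ) : ℂ :=
  (CpD n q t ta T ν * CmD n q t ta ν) / (c0sq q t T ν * CpN n q t ta ν * CmN n q t ta T ν)

/-- the discrete bilinear form `⟨f,g⟩_N^{qR}`. -/
def braket (n N : ℕ) (q t ta : ℂ) (T : Fin 4 → ℂ) (f g : (Fin n → ℂ) → ℂ) : ℂ :=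
  ∑ ν ∈ alcove n N, f (gridZ n q t ta ν) * g (gridZ n q t ta ν) * weightQR n q t ta T ν

/-! ### Auxiliary lemmas for `statement0` -/

lemma one_sub_ne_zero_of_norm_ne {z : ℂ} (h : ‖z‖ ≠ 1) : (1 : ℂ) - z ≠ 0 := by
  intro h0
  rw [sub_eq_zero] at h0
  apply h; rw [← h0]; simp

lemma qPoch_ne_zero {q a : ℂ} {m : ℕ} (h : ∀ i < m, ‖a‖ * ‖q‖ ^ i ≠ 1) :
    qPoch q a m ≠ 0 := by
  unfold qPoch
  rw [Finset.prod_ne_zero_iff]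
  intro i hi
  apply one_sub_ne_zero_of_norm_ne
  rw [norm_mul, norm_pow]
  exact h i (Finset.mem_range.mp hi)

lemma qPoch_ne_zero_small {q a : ℂ} (hq : ‖q‖ ≤ 1) (ha : ‖a‖ < 1) (m : ℕ) :
    qPoch q a m ≠ 0 := by
  apply qPoch_ne_zero
  intro i _
  have h1 : ‖q‖ ^ i ≤ 1 := pow_le_one₀ (norm_nonneg q) hq
  nlinarith [norm_nonneg a, pow_nonneg (norm_nonneg q) i]

lemma tauv_norm (n : ℕ) (i : Fin n) :
    ‖tauv n (1/2 : ℂ) (1/4 : ℂ) i‖ = (1/2 : ℝ) ^ (n - 1 - (i : ℕ)) * (1/4) := by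
  simp [tauv, norm_mul, norm_pow]

lemma tauv_le (n : ℕ) (i : Fin n) : ‖tauv n (1/2 : ℂ) (1/4 : ℂ) i‖ ≤ 1/4 := by
  rw [tauv_norm]
  have : (1/2 : ℝ) ^ (n - 1 - (i : ℕ)) ≤ 1 := pow_le_one₀ (by norm_num) (by norm_num)
  nlinarith

lemma tauv_pos (n : ℕ) (i : Fin n) : 0 < ‖tauv n (1/2 : ℂ) (1/4 : ℂ) i‖ := by
  rw [tauv_norm]; positivity

lemma tauv_ratio_norm (n : ℕ) (j k : Fin n) (hjk : j < k) :
    ‖tauv n (1/2 : ℂ) (1/4 : ℂ) j‖ * ‖tauv n (1/2 : ℂ) (1/4 : ℂ) k‖⁻¹ ≤ 1/2 := by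
  rw [tauv_norm, tauv_norm]
  have hk : (k : ℕ) < n := k.isLt
  have hjk' : (j : ℕ) < (k : ℕ) := hjk
  have hA : n - 1 - (j : ℕ) = (n - 1 - (k : ℕ)) + ((k : ℕ) - (j : ℕ)) := by omega
  rw [hA, pow_add]
  have hne : ((1/2 : ℝ) ^ (n - 1 - (k : ℕ)) * (1/4)) ≠ 0 := by positivity
  rw [show (1/2 : ℝ) ^ (n - 1 - (k:ℕ)) * (1/2) ^ ((k:ℕ) - (j:ℕ)) * (1/4)
      = ((1/2 : ℝ) ^ (n - 1 - (k:ℕ)) * (1/4)) * (1/2) ^ ((k:ℕ) - (j:ℕ)) by ring,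
    mul_assoc, mul_comm, mul_assoc, inv_mul_cancel₀ hne]
  have hd : 1 ≤ (k : ℕ) - (j : ℕ) := by omega
  calc (1/2 : ℝ) ^ ((k:ℕ) - (j:ℕ)) * 1 = (1/2 : ℝ) ^ ((k:ℕ) - (j:ℕ)) := mul_one _
    _ ≤ (1/2 : ℝ) ^ 1 := pow_le_pow_of_le_one (by norm_num) (by norm_num) hd
    _ = 1/2 := pow_one _

lemma alcove_le' {n N : ℕ} {ν : Fin n → ℕ} (h : ν ∈ alcove n N) (i : Fin n) : ν i ≤ N := by
  unfold alcove at h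
  rw [Finset.mem_filter, Finset.mem_image] at h
  obtain ⟨⟨g, -, hg⟩, -⟩ := h
  rw [← hg]
  exact Nat.lt_succ_iff.mp (g i).isLt

lemma bigfac_ne_one (n N e i' : ℕ) (h : e + i' + 3 ≤ n + N + 1) :
    (2:ℝ)^(n+N+1) * ((1/2:ℝ)^e * (1/4)) * (1/2:ℝ)^i' ≠ 1 := by
  set B := e + 2 + i' with hB
  set d := n + N + 1 - B with hd'
  have hd : 1 ≤ d := by omega
  have hA : n + N + 1 = B + d := by omega
  have e1 : (2:ℝ)^(n+N+1) * ((1/2:ℝ)^e * (1/4)) * (1/2:ℝ)^i'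
      = ((2:ℝ)^B * (1/2)^B) * 2^d := by
    rw [hA, hB, pow_add, pow_add, pow_add, pow_add]; norm_num; ring
  rw [e1, ← mul_pow]
  norm_num
  exact ne_of_gt (one_lt_pow₀ (by norm_num) (by omega))

lemma master (n : ℕ) (T : Fin 4 → ℂ) (s : ℂ) (hs : s ≠ 0) (ν : Fin n → ℕ)
    (hT1 : ∀ r, 1/4 ≤ ‖T r‖)
    (hT2 : ∀ (r : Fin 4) (i : Fin n) (i' : ℕ), i' < ν i →
      ‖T r‖ * ‖tauv n (1/2 : ℂ) (1/4 : ℂ) i‖ * (1/2 : ℝ) ^ i' ≠ 1) :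
    c0fac (1/2 : ℂ) s ν * CpN n (1/2) (1/2) (1/4) ν ≠ 0 ∧
    CpD n (1/2) (1/2) (1/4) T ν ≠ 0 ∧
    c0fac (1/2 : ℂ) s ν * CmN n (1/2) (1/2) (1/4) T ν ≠ 0 ∧
    CmD n (1/2) (1/2) (1/4) ν ≠ 0 := by
  have hqn : ‖(1/2 : ℂ)‖ = 1/2 := by norm_num
  have hq1 : ‖(1/2 : ℂ)‖ ≤ 1 := by norm_num
  have hc0 : c0fac (1/2 : ℂ) s ν ≠ 0 := by
    unfold c0fac
    rw [Finset.prod_ne_zero_iff]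
    intro i _
    exact pow_ne_zero _ (mul_ne_zero (pow_ne_zero _ (by norm_num)) hs)
  have hpair : ∀ p : Fin n × Fin n, p ∈ pairsF n → p.1 < p.2 := by
    intro p hp
    exact (Finset.mem_filter.mp hp).2
  refine ⟨mul_ne_zero hc0 ?_, ?_, mul_ne_zero hc0 ?_, ?_⟩
  · -- CpN
    unfold CpN
    apply mul_ne_zero
    · rw [Finset.prod_ne_zero_iff]
      intro p hp
      have h1 := tauv_le n p.1
      have h2 := tauv_le n p.2
      have h1p := tauv_pos n p.1
      have h2p := tauv_pos n p.2
      apply mul_ne_zero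
      · apply qPoch_ne_zero_small hq1
        simp only [norm_mul, norm_inv, norm_pow, hqn]; nlinarith
      · apply qPoch_ne_zero_small hq1
        simp only [norm_mul, norm_inv, norm_pow, hqn]
        have := tauv_ratio_norm n p.1 p.2 (hpair p hp)
        linarith
    · rw [Finset.prod_ne_zero_iff]
      intro i _
      have h1 := tauv_le n i
      have h1p := tauv_pos n i
      apply qPoch_ne_zero_small hq1
      simp only [norm_mul, norm_inv, norm_pow, hqn]; nlinarith
  · -- CpD
    unfold CpD
    apply mul_ne_zero
    · rw [Finset.prod_ne_zero_iff]
      intro p hp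
      have h1 := tauv_le n p.1
      have h2 := tauv_le n p.2
      have h1p := tauv_pos n p.1
      have h2p := tauv_pos n p.2
      apply mul_ne_zero
      · apply qPoch_ne_zero_small hq1
        simp only [norm_mul, norm_inv, norm_pow, hqn]; nlinarith
      · apply qPoch_ne_zero_small hq1
        simp only [norm_mul, norm_inv, norm_pow, hqn]
        have := tauv_ratio_norm n p.1 p.2 (hpair p hp)
        have h2i : (0:ℝ) < ‖tauv n (1/2 : ℂ) (1/4 : ℂ) p.2‖⁻¹ := by positivity
        nlinarith
    · rw [Finset.prod_ne_zero_iff]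
      intro i _
      rw [Finset.prod_ne_zero_iff]
      intro r _
      apply qPoch_ne_zero
      intro i' hi'
      simp only [norm_mul, hqn]
      exact hT2 r i i' hi'
  · -- CmN
    unfold CmN
    apply mul_ne_zero
    · rw [Finset.prod_ne_zero_iff]
      intro p hp
      have h1 := tauv_le n p.1
      have h2 := tauv_le n p.2
      have h1p := tauv_pos n p.1
      have h2p := tauv_pos n p.2
      apply mul_ne_zero
      · apply qPoch_ne_zero_small hq1
        simp only [norm_mul, norm_inv, norm_pow, hqn]
        have hh : ((1:ℝ)/2)⁻¹ = 2 := by norm_num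
        rw [hh]; nlinarith
      · apply qPoch_ne_zero_small hq1
        simp only [norm_mul, norm_inv, norm_pow, hqn]
        have := tauv_ratio_norm n p.1 p.2 (hpair p hp)
        have h2i : (0:ℝ) < ‖tauv n (1/2 : ℂ) (1/4 : ℂ) p.2‖⁻¹ := by positivity
        have hh : ((1:ℝ)/2)⁻¹ = 2 := by norm_num
        rw [hh]; nlinarith
    · rw [Finset.prod_ne_zero_iff]
      intro i _
      rw [Finset.prod_ne_zero_iff]
      intro r _
      have hTr := hT1 r
      have hTp : (0 : ℝ) < ‖T r‖ := by linarith
      have hinv : ‖T r‖⁻¹ ≤ 4 := by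
        rw [inv_eq_one_div, div_le_iff₀ hTp]; linarith
      have hinvp : (0 : ℝ) ≤ ‖T r‖⁻¹ := by positivity
      have h1 := tauv_le n i
      have h1p := tauv_pos n i
      apply qPoch_ne_zero_small hq1
      simp only [norm_mul, norm_inv, norm_pow, hqn]
      nlinarith
  · -- CmD
    unfold CmD
    apply mul_ne_zero
    · rw [Finset.prod_ne_zero_iff]
      intro p hp
      have h1 := tauv_le n p.1
      have h2 := tauv_le n p.2
      have h1p := tauv_pos n p.1
      have h2p := tauv_pos n p.2
      apply mul_ne_zero
      · apply qPoch_ne_zero_small hq1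
        simp only [norm_mul, norm_inv, norm_pow, hqn]; nlinarith
      · apply qPoch_ne_zero_small hq1
        simp only [norm_mul, norm_inv, norm_pow, hqn]
        have := tauv_ratio_norm n p.1 p.2 (hpair p hp)
        have h2i : (0:ℝ) < ‖tauv n (1/2 : ℂ) (1/4 : ℂ) p.2‖⁻¹ := by positivity
        nlinarith
    · rw [Finset.prod_ne_zero_iff]
      intro i _
      have h1 := tauv_le n i
      have h1p := tauv_pos n i
      apply qPoch_ne_zero_small hq1
      simp only [norm_mul, norm_inv, norm_pow, hqn]; nlinarith

/-- (a) For every `ν` in the cone `Λ` the c-functions `C₊^{qR}(ν)` and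
`C₋^{qR}(ν)` are well defined and nonzero as meromorphic expressions in the parameters
`t, t₀, t₁, t₂, t₃, q` (together with a square root `s` of `t₀t₁t₂t₃q⁻¹`): no factor in a
numerator or denominator is identically zero, i.e. there is a choice of parameter values where
numerators and denominators are simultaneously nonzero.  (b) For every `ν` in the alcove `Λ_N`
the same holds for parameters subject to the truncation condition `t_a t_b t^{n-1} = q^{-N}`. -/
theorem statement0 (n N : ℕ) (hn : 1 ≤ n) (a b : Fin 4) (hab : a ≠ b) :
    (∀ ν : Fin n → ℕ, isDominant ν →
      ∃ (q t s : ℂ) (T : Fin 4 → ℂ),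
        s ^ 2 * q = (∏ r, T r) ∧
        c0fac t s ν * CpN n q t (T a) ν ≠ 0 ∧ CpD n q t (T a) T ν ≠ 0 ∧
        c0fac t s ν * CmN n q t (T a) T ν ≠ 0 ∧ CmD n q t (T a) ν ≠ 0) ∧
    (∀ ν : Fin n → ℕ, ν ∈ alcove n N →
      ∃ (q t s : ℂ) (T : Fin 4 → ℂ),
        q ≠ 0 ∧
        T a * T b * t ^ (n - 1) * q ^ N = 1 ∧
        s ^ 2 * q = (∏ r, T r) ∧
        c0fac t s ν * CpN n q t (T a) ν ≠ 0 ∧ CpD n q t (T a) T ν ≠ 0 ∧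
        c0fac t s ν * CmN n q t (T a) T ν ≠ 0 ∧ CmD n q t (T a) ν ≠ 0) := by
  constructor
  · -- part (a)
    intro ν _
    have hspos : (0:ℝ) < Real.sqrt (1/128) := Real.sqrt_pos.mpr (by norm_num)
    have hs : ((Real.sqrt (1/128) : ℝ) : ℂ) ≠ 0 :=
      Complex.ofReal_ne_zero.mpr (ne_of_gt hspos)
    have hT1 : ∀ r : Fin 4, 1/4 ≤ ‖((fun _ => (1/4 : ℂ)) r)‖ := by
      intro r; norm_num
    have hT2 : ∀ (r : Fin 4) (i : Fin n) (i' : ℕ), i' < ν i →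
        ‖((fun _ => (1/4 : ℂ)) r)‖ * ‖tauv n (1/2 : ℂ) (1/4 : ℂ) i‖ * (1/2 : ℝ) ^ i' ≠ 1 := by
      intro r i i' _
      have h1 := tauv_le n i
      have hp := tauv_pos n i
      have hq1 : ((1:ℝ)/2) ^ i' ≤ 1 := pow_le_one₀ (by norm_num) (by norm_num)
      have hqp : (0:ℝ) < ((1:ℝ)/2) ^ i' := by positivity
      have hnn : ‖((1:ℂ)/4)‖ = 1/4 := by norm_num
      simp only [hnn]
      nlinarith
    have hm := master n (fun _ => (1/4 : ℂ)) _ hs ν hT1 hT2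
    refine ⟨1/2, 1/2, ((Real.sqrt (1/128) : ℝ) : ℂ), fun _ => (1/4 : ℂ),
      ?_, hm.1, hm.2.1, hm.2.2.1, hm.2.2.2⟩
    have hsq : ((Real.sqrt (1/128) : ℝ) : ℂ) ^ 2 = (((1:ℝ)/128 : ℝ) : ℂ) := by
      rw [← Complex.ofReal_pow, Real.sq_sqrt (by norm_num)]
    rw [hsq, Finset.prod_const]
    norm_num [Finset.card_univ]
  · -- part (b)
    intro ν hν
    set T : Fin 4 → ℂ := fun r => if r = b then (2:ℂ)^(n+N+1) else 1/4 with hT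
    have hTb : T b = (2:ℂ)^(n+N+1) := if_pos rfl
    have hTa : T a = 1/4 := if_neg hab
    have hspos : (0:ℝ) < Real.sqrt ((2:ℝ)^(n+N+1)/32) := Real.sqrt_pos.mpr (by positivity)
    have hs : ((Real.sqrt ((2:ℝ)^(n+N+1)/32) : ℝ) : ℂ) ≠ 0 :=
      Complex.ofReal_ne_zero.mpr (ne_of_gt hspos)
    have hnorm2 : ‖(2:ℂ)^(n+N+1)‖ = (2:ℝ)^(n+N+1) := by
      rw [norm_pow]; norm_num
    have hT1 : ∀ r : Fin 4, 1/4 ≤ ‖T r‖ := by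
      intro r
      by_cases hr : r = b
      · subst hr
        rw [hTb, hnorm2]
        have : (1:ℝ) ≤ (2:ℝ)^(n+N+1) := one_le_pow₀ (by norm_num)
        linarith
      · have : T r = 1/4 := if_neg hr
        rw [this]; norm_num
    have hT2 : ∀ (r : Fin 4) (i : Fin n) (i' : ℕ), i' < ν i →
        ‖T r‖ * ‖tauv n (1/2 : ℂ) (1/4 : ℂ) i‖ * (1/2 : ℝ) ^ i' ≠ 1 := by
      intro r i i' hi'
      have hiN : ν i ≤ N := alcove_le' hν i
      by_cases hr : r = b
      · subst hr
        rw [hTb, hnorm2, tauv_norm]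
        apply bigfac_ne_one
        omega
      · have hTr : T r = 1/4 := if_neg hr
        rw [hTr]
        have h1 := tauv_le n i
        have hp := tauv_pos n i
        have hq1 : ((1:ℝ)/2) ^ i' ≤ 1 := pow_le_one₀ (by norm_num) (by norm_num)
        have hqp : (0:ℝ) < ((1:ℝ)/2) ^ i' := by positivity
        have hnn : ‖((1:ℂ)/4)‖ = 1/4 := by norm_num
        simp only [hnn]
        nlinarith
    have hm := master n T _ hs ν hT1 hT2
    refine ⟨1/2, 1/2, ((Real.sqrt ((2:ℝ)^(n+N+1)/32) : ℝ) : ℂ), T, by norm_num, ?_, ?_, ?_, ?_, ?_, ?_⟩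
    · -- truncation condition
      rw [hTa, hTb]
      have e : n + N + 1 = (n-1) + N + 2 := by omega
      have h2 : (2:ℂ)^(n-1) * (1/2:ℂ)^(n-1) = 1 := by rw [← mul_pow]; norm_num
      have h3 : (2:ℂ)^N * (1/2:ℂ)^N = 1 := by rw [← mul_pow]; norm_num
      rw [e]
      calc (1/4:ℂ) * 2^((n-1)+N+2) * (1/2)^(n-1) * (1/2)^N
          = ((2:ℂ)^(n-1)*(1/2)^(n-1)) * ((2:ℂ)^N*(1/2)^N) * ((1/4) * 2^2) := by
            rw [pow_add, pow_add]; ring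
        _ = 1 := by rw [h2, h3]; norm_num
    · -- s^2 * q = ∏ T r
      have hsq : ((Real.sqrt ((2:ℝ)^(n+N+1)/32) : ℝ) : ℂ) ^ 2
          = (((2:ℝ)^(n+N+1)/32 : ℝ) : ℂ) := by
        rw [← Complex.ofReal_pow, Real.sq_sqrt (by positivity)]
      rw [hsq, ← Finset.mul_prod_erase Finset.univ T (Finset.mem_univ b), hTb]
      have hprod : ∏ r ∈ Finset.univ.erase b, T r = (1/4 : ℂ)^3 := by
        rw [Finset.prod_congr rfl fun r hr => if_neg (Finset.ne_of_mem_erase hr),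
          Finset.prod_const, Finset.card_erase_of_mem (Finset.mem_univ b)]
        norm_num [Finset.card_univ]
      rw [hprod]
      push_cast
      ring
    · rw [hTa]; exact hm.1
    · rw [hTa]; exact hm.2.1
    · rw [hTa]; exact hm.2.2.1
    · rw [hTa]; exact hm.2.2.2

end QR
end
end

section
/- For generic values of q, t, and t_a, every Laurent polynomial in the space H_N^{qR} = Span{m_λ : λ ∈ Λ_N} is uniquely determined by its values at the grid points τq^ν, ν ∈ Λ_N. Equivalently, the determinant of the matrix M = [m_μ(τq^ν)]_{μ,ν∈Λ_N} (rows and columns ordered by any total order extending the dominance partial order) is nonzero as a Laurent polynomial in q for generic t and t_a; in particular, if Σ_{μ∈Λ_N} c_μ m_μ(τq^ν) = 0 for all ν ∈ Λ_N then all coefficients c_μ vanish. -/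
open scoped BigOperators Classical

noncomputable section

/-!
Multiplying the column of `ν` by `∏ i, (τ q^ν)_i ^ N` turns the matrix `[m_μ(τ q^ν)]` into a
matrix of polynomials in `q, t, t_a`; its determinant is the polynomial `P`. To see `P ≠ 0`,
set `t = t_a = 1`. The `(μ, ν)` entry becomes a sum of powers `q ^ (∑ i, ν i * (μ' i + N))`
over the signed orbit of `μ`, and by the rearrangement inequality the top exponent
`ν ⬝ᵥ μ + N ∑ ν` is reached at `μ' = μ`, with a positive coefficient. For a permutation
`σ ≠ 1` of `Λ_N` we have `∑ ν, ν ⬝ᵥ σ ν < ∑ ν, ν ⬝ᵥ ν` because the weights are distinct.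
So only the diagonal reaches the top degree of the determinant, and the top coefficient
is nonzero. Wherever `P` does not vanish, `[m_μ(τ q^ν)]` is invertible.
-/

namespace Polynomial

theorem coeff_sum_X_pow_ne_zero {R ι : Type*} [Semiring R] [CharZero R]
    {s : Finset ι} {d : ι → ℕ} {a : ι} (ha : a ∈ s) :
    (∑ b ∈ s, (X : R[X]) ^ d b).coeff (d a) ≠ 0 := by
  simp only [finsetSum_coeff, coeff_X_pow, Finset.sum_boole]
  exact Nat.cast_ne_zero.mpr (Finset.card_ne_zero_of_mem (Finset.mem_filter.mpr ⟨ha, rfl⟩))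

theorem det_ne_zero_of_sum_natDegree_lt {ι R : Type*} [Fintype ι] [DecidableEq ι]
    [CommRing R] [IsDomain R] (A : Matrix ι ι R[X]) (D : ι → ι → ℕ)
    (hle : ∀ i j, (A i j).natDegree ≤ D i j) (hdiag : ∀ i, (A i i).coeff (D i i) ≠ 0)
    (hlt : ∀ σ : Equiv.Perm ι, σ ≠ 1 → ∑ i, D (σ i) i < ∑ i, D i i) :
    A.det ≠ 0 := by
  have hne : ∀ i, A i i ≠ 0 := fun i h => hdiag i (by simp [h])
  have hdeg : (∏ i, A i i).natDegree = ∑ i, D i i := by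
    rw [natDegree_prod _ _ fun i _ => hne i]
    exact Finset.sum_congr rfl fun i _ => (hle i i).antisymm (le_natDegree_of_ne_zero (hdiag i))
  intro hdet
  suffices A.det.coeff (∑ i, D i i) ≠ 0 by simp [hdet] at this
  rw [Matrix.det_apply', finsetSum_coeff, Finset.sum_eq_single 1]
  · simpa [← hdeg] using Finset.prod_ne_zero_iff.mpr fun i _ => hne i
  · intro σ _ hσ
    rw [coeff_intCast_mul, coeff_eq_zero_of_natDegree_lt, mul_zero]
    calc (∏ i, A (σ i) i).natDegree ≤ ∑ i, (A (σ i) i).natDegree := natDegree_prod_le _ _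
      _ ≤ ∑ i, D (σ i) i := Finset.sum_le_sum fun i _ => hle _ _
      _ < ∑ i, D i i := hlt σ hσ
  · simp

end Polynomial

theorem two_mul_dotProduct_le {κ : Type*} [Fintype κ] (a b : κ → ℕ) :
    2 * (a ⬝ᵥ b) ≤ a ⬝ᵥ a + b ⬝ᵥ b := by
  simp only [dotProduct, Finset.mul_sum, ← Finset.sum_add_distrib]
  exact Finset.sum_le_sum fun i _ => by nlinarith [two_mul_le_add_sq (a i) (b i)]

theorem two_mul_dotProduct_lt {κ : Type*} [Fintype κ] {a b : κ → ℕ} (hab : a ≠ b) :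
    2 * (a ⬝ᵥ b) < a ⬝ᵥ a + b ⬝ᵥ b := by
  obtain ⟨k, hk⟩ := Function.ne_iff.mp hab
  simp only [dotProduct, Finset.mul_sum, ← Finset.sum_add_distrib]
  refine Finset.sum_lt_sum (fun i _ => by nlinarith [two_mul_le_add_sq (a i) (b i)])
    ⟨k, Finset.mem_univ k, ?_⟩
  zify
  nlinarith [sq_pos_of_ne_zero (sub_ne_zero.mpr (Int.natCast_inj.not.mpr hk))]

theorem sum_dotProduct_comp_perm_lt {ι κ : Type*} [Fintype ι] [Fintype κ]
    {v : ι → κ → ℕ} (hv : Function.Injective v) {σ : Equiv.Perm ι} (hσ : σ ≠ 1) :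
    ∑ i, v i ⬝ᵥ v (σ i) < ∑ i, v i ⬝ᵥ v i := by
  obtain ⟨i₀, hi₀⟩ : ∃ i, σ i ≠ i := by
    by_contra! h
    exact hσ (Equiv.ext h)
  have hlt : ∑ i, 2 * (v i ⬝ᵥ v (σ i)) < ∑ i, (v i ⬝ᵥ v i + v (σ i) ⬝ᵥ v (σ i)) :=
    Finset.sum_lt_sum (fun i _ => two_mul_dotProduct_le _ _)
      ⟨i₀, Finset.mem_univ _, two_mul_dotProduct_lt (hv.ne hi₀.symm)⟩
  rw [← Finset.mul_sum, Finset.sum_add_distrib,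
    Equiv.sum_comp σ fun i => v i ⬝ᵥ v i] at hlt
  omega

namespace QR

lemma isDominant_of_mem_alcove {n N : ℕ} {μ : Fin n → ℕ} (h : μ ∈ alcove n N) :
    isDominant μ :=
  (Finset.mem_filter.mp h).2

lemma le_of_mem_alcove {n N : ℕ} {μ : Fin n → ℕ} (h : μ ∈ alcove n N) (i : Fin n) :
    μ i ≤ N := by
  obtain ⟨g, -, rfl⟩ := Finset.mem_image.mp (Finset.mem_filter.mp h).1
  exact Nat.lt_succ_iff.mp (g i).isLt

lemma natCast_mem_signedOrbit {n : ℕ} (μ : Fin n → ℕ) :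
    (fun i => (μ i : ℤ)) ∈ signedOrbit μ :=
  Finset.mem_image.mpr ⟨(1, fun _ => true), Finset.mem_univ _, by simp⟩

lemma exists_perm_abs_eq_of_mem_signedOrbit {n : ℕ} {μ : Fin n → ℕ} {μ' : Fin n → ℤ}
    (h : μ' ∈ signedOrbit μ) : ∃ π : Equiv.Perm (Fin n), ∀ i, |μ' i| = μ (π i) := by
  obtain ⟨⟨π, s⟩, -, rfl⟩ := Finset.mem_image.mp h
  exact ⟨π, fun i => by dsimp only; split_ifs <;> simp⟩

lemma add_nonneg_of_mem_signedOrbit {n N : ℕ} {μ : Fin n → ℕ} (hμ : ∀ i, μ i ≤ N)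
    {μ' : Fin n → ℤ} (h : μ' ∈ signedOrbit μ) (i : Fin n) : 0 ≤ μ' i + N := by
  obtain ⟨π, hπ⟩ := exists_perm_abs_eq_of_mem_signedOrbit h
  have : |μ' i| ≤ N := by rw [hπ]; exact_mod_cast hμ (π i)
  linarith [neg_abs_le (μ' i)]

/-- The rearrangement inequality, extended to sign changes. -/
lemma sum_mul_le_of_mem_signedOrbit {n : ℕ} {c : Fin n → ℤ} (hc : Antitone c)
    (hc₀ : ∀ i, 0 ≤ c i) {μ : Fin n → ℕ} (hμ : isDominant μ) {μ' : Fin n → ℤ}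
    (h : μ' ∈ signedOrbit μ) : ∑ i, c i * μ' i ≤ ∑ i, c i * μ i := by
  obtain ⟨π, hπ⟩ := exists_perm_abs_eq_of_mem_signedOrbit h
  have hμ' : Antitone fun i => (μ i : ℤ) := Nat.mono_cast.comp_antitone hμ
  calc ∑ i, c i * μ' i ≤ ∑ i, c i * μ (π i) := Finset.sum_le_sum fun i _ =>
        mul_le_mul_of_nonneg_left ((le_abs_self _).trans (hπ i).le) (hc₀ i)
    _ ≤ ∑ i, c i * μ i := by
        simpa using (hc.monovary hμ').sum_smul_comp_perm_le_sum_smul (σ := π)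

lemma prod_pow_mul_mono {n N : ℕ} {μ : Fin n → ℕ} (hμ : ∀ i, μ i ≤ N) {z : Fin n → ℂ}
    (hz : ∀ i, z i ≠ 0) :
    (∏ i, z i ^ N) * mono μ z = ∑ μ' ∈ signedOrbit μ, ∏ i, z i ^ (μ' i + N).toNat := by
  rw [mono, Finset.mul_sum]
  refine Finset.sum_congr rfl fun μ' hμ' => ?_
  rw [← Finset.prod_mul_distrib]
  refine Finset.prod_congr rfl fun i _ => ?_
  rw [← zpow_natCast (z i) (μ' i + N).toNat,
    Int.toNat_of_nonneg (add_nonneg_of_mem_signedOrbit hμ hμ' i), add_comm,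
    zpow_add₀ (hz i), zpow_natCast]

lemma gridZ_ne_zero {n : ℕ} {q t ta : ℂ} (hq : q ≠ 0) (ht : t ≠ 0) (hta : ta ≠ 0)
    (ν : Fin n → ℕ) (i : Fin n) : gridZ n q t ta ν i ≠ 0 := by
  simp [gridZ, tauv, hq, ht, hta]

/-- `X 0, X 1, X 2` stand for `q, t, t_a`. -/
def gridPoly (n : ℕ) (ν : Fin n → ℕ) (i : Fin n) : MvPolynomial (Fin 3) ℂ :=
  MvPolynomial.X 1 ^ (n - 1 - (i : ℕ)) * MvPolynomial.X 2 * MvPolynomial.X 0 ^ ν i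

lemma eval_gridPoly {n : ℕ} (q t ta : ℂ) (ν : Fin n → ℕ) (i : Fin n) :
    MvPolynomial.eval ![q, t, ta] (gridPoly n ν i) = gridZ n q t ta ν i := by
  simp [gridPoly, gridZ, tauv]

/-- For `μ ∈ Λ_N` this is `(∏ i, z i ^ N) * m_μ(z)` at `z = τ q^ν`;
otherwise `toNat` truncates the negative exponents. -/
def monoGridPoly (n N : ℕ) (μ ν : Fin n → ℕ) : MvPolynomial (Fin 3) ℂ :=
  ∑ μ' ∈ signedOrbit μ, ∏ i, gridPoly n ν i ^ (μ' i + N).toNat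

def gridMatrix (n N : ℕ) (q t ta : ℂ) : Matrix (alcove n N) (alcove n N) ℂ :=
  .of fun μ ν => mono μ (gridZ n q t ta ν)

def gridPolyMatrix (n N : ℕ) : Matrix (alcove n N) (alcove n N) (MvPolynomial (Fin 3) ℂ) :=
  .of fun μ ν => monoGridPoly n N μ ν

lemma eval_monoGridPoly {n N : ℕ} {q t ta : ℂ} (hq : q ≠ 0) (ht : t ≠ 0) (hta : ta ≠ 0)
    {μ : Fin n → ℕ} (hμ : ∀ i, μ i ≤ N) (ν : Fin n → ℕ) :
    MvPolynomial.eval ![q, t, ta] (monoGridPoly n N μ ν) =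
      (∏ i, gridZ n q t ta ν i ^ N) * mono μ (gridZ n q t ta ν) := by
  rw [prod_pow_mul_mono hμ (gridZ_ne_zero hq ht hta ν)]
  simp [monoGridPoly, eval_gridPoly]

lemma eval_det_gridPolyMatrix {n N : ℕ} {q t ta : ℂ} (hq : q ≠ 0) (ht : t ≠ 0) (hta : ta ≠ 0) :
    MvPolynomial.eval ![q, t, ta] (gridPolyMatrix n N).det =
      (∏ ν : alcove n N, ∏ i, gridZ n q t ta ν i ^ N) * (gridMatrix n N q t ta).det := by
  rw [RingHom.map_det, ← Matrix.det_mul_row]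
  congr 1
  ext μ ν
  exact eval_monoGridPoly hq ht hta (le_of_mem_alcove μ.2) ν

open Polynomial

def specializeQ : MvPolynomial (Fin 3) ℂ →+* ℂ[X] :=
  MvPolynomial.eval₂Hom C ![X, 1, 1]

def qExponent {n : ℕ} (N : ℕ) (ν : Fin n → ℕ) (μ' : Fin n → ℤ) : ℕ :=
  ∑ i, ν i * (μ' i + N).toNat

lemma specializeQ_monoGridPoly (n N : ℕ) (μ ν : Fin n → ℕ) :
    specializeQ (monoGridPoly n N μ ν) = ∑ μ' ∈ signedOrbit μ, X ^ qExponent N ν μ' := by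
  simp [monoGridPoly, gridPoly, specializeQ, qExponent, ← pow_mul, Finset.prod_pow_eq_pow_sum]

lemma qExponent_natCast {n : ℕ} (N : ℕ) (μ ν : Fin n → ℕ) :
    qExponent N ν (fun i => (μ i : ℤ)) = ν ⬝ᵥ μ + N * ∑ i, ν i := by
  simp only [qExponent, ← Nat.cast_add, Int.toNat_natCast, dotProduct, mul_add,
    Finset.sum_add_distrib, Finset.mul_sum]
  simp only [mul_comm]

lemma qExponent_le {n N : ℕ} {μ ν : Fin n → ℕ} (hμ : isDominant μ) (hν : isDominant ν)
    (hμN : ∀ i, μ i ≤ N) {μ' : Fin n → ℤ} (h : μ' ∈ signedOrbit μ) :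
    qExponent N ν μ' ≤ qExponent N ν (fun i => (μ i : ℤ)) := by
  have hcast : ∀ μ'' ∈ signedOrbit μ,
      (qExponent N ν μ'' : ℤ) = ∑ i, (ν i : ℤ) * μ'' i + N * ∑ i, (ν i : ℤ) := by
    intro μ'' hmem
    simp only [qExponent, Nat.cast_sum, Nat.cast_mul, Finset.mul_sum, ← Finset.sum_add_distrib]
    refine Finset.sum_congr rfl fun i _ => ?_
    rw [Int.toNat_of_nonneg (add_nonneg_of_mem_signedOrbit hμN hmem i)]
    ring
  zify
  rw [hcast μ' h, hcast _ (natCast_mem_signedOrbit μ)]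
  exact add_le_add (sum_mul_le_of_mem_signedOrbit (Nat.mono_cast.comp_antitone hν)
    (fun i => Int.natCast_nonneg _) hμ h) le_rfl

lemma natDegree_specializeQ_monoGridPoly_le {n N : ℕ} {μ ν : Fin n → ℕ} (hμ : isDominant μ)
    (hν : isDominant ν) (hμN : ∀ i, μ i ≤ N) :
    (specializeQ (monoGridPoly n N μ ν)).natDegree ≤ ν ⬝ᵥ μ + N * ∑ i, ν i := by
  rw [specializeQ_monoGridPoly, ← qExponent_natCast]
  refine natDegree_sum_le_of_forall_le _ _ fun μ' h => ?_
  rw [natDegree_X_pow]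
  exact qExponent_le hμ hν hμN h

lemma coeff_specializeQ_monoGridPoly_ne_zero (n N : ℕ) (μ ν : Fin n → ℕ) :
    (specializeQ (monoGridPoly n N μ ν)).coeff (ν ⬝ᵥ μ + N * ∑ i, ν i) ≠ 0 := by
  rw [specializeQ_monoGridPoly, ← qExponent_natCast]
  exact coeff_sum_X_pow_ne_zero (natCast_mem_signedOrbit μ)

lemma det_gridPolyMatrix_ne_zero (n N : ℕ) : (gridPolyMatrix n N).det ≠ 0 := by
  have hspec : (specializeQ.mapMatrix (gridPolyMatrix n N)).det ≠ 0 := by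
    refine det_ne_zero_of_sum_natDegree_lt _ (fun μ ν => ν.1 ⬝ᵥ μ.1 + N * ∑ i, ν.1 i)
      (fun μ ν => ?_) (fun μ => ?_) (fun σ hσ => ?_)
    · exact natDegree_specializeQ_monoGridPoly_le (isDominant_of_mem_alcove μ.2)
        (isDominant_of_mem_alcove ν.2) (le_of_mem_alcove μ.2)
    · exact coeff_specializeQ_monoGridPoly_ne_zero n N μ μ
    · simp only [Finset.sum_add_distrib]
      exact Nat.add_lt_add_right (sum_dotProduct_comp_perm_lt Subtype.val_injective hσ) _
  rw [← RingHom.map_det] at hspec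
  exact fun h => hspec (by rw [h, map_zero])

lemma eq_zero_of_sum_mul_mono_gridZ_eq_zero {n N : ℕ} {q t ta : ℂ}
    (hdet : (gridMatrix n N q t ta).det ≠ 0) (c : (Fin n → ℕ) → ℂ)
    (hc : ∀ ν ∈ alcove n N, ∑ μ ∈ alcove n N, c μ * mono μ (gridZ n q t ta ν) = 0) :
    ∀ μ ∈ alcove n N, c μ = 0 := by
  have hv := Matrix.eq_zero_of_vecMul_eq_zero hdet (v := fun μ : alcove n N => c μ) <| by
    ext ν
    rw [Pi.zero_apply, ← hc ν ν.2, ← Finset.sum_coe_sort]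
    rfl
  exact fun μ hμ => congrFun hv ⟨μ, hμ⟩

theorem statement4_general (n N : ℕ) :
    ∃ P : MvPolynomial (Fin 3) ℂ, P ≠ 0 ∧
      ∀ q t ta : ℂ, q ≠ 0 → t ≠ 0 → ta ≠ 0 →
        MvPolynomial.eval ![q, t, ta] P ≠ 0 →
        (∀ cf cg : (Fin n → ℕ) → ℂ,
          (∀ ν ∈ alcove n N,
            (∑ mu ∈ alcove n N, cf mu * mono mu (gridZ n q t ta ν)) =
              ∑ mu ∈ alcove n N, cg mu * mono mu (gridZ n q t ta ν)) →
          ∀ z : Fin n → ℂ, (∀ i, z i ≠ 0) →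
            (∑ mu ∈ alcove n N, cf mu * mono mu z) =
              ∑ mu ∈ alcove n N, cg mu * mono mu z) ∧
        (∀ c : (Fin n → ℕ) → ℂ,
          (∀ ν ∈ alcove n N, (∑ mu ∈ alcove n N, c mu * mono mu (gridZ n q t ta ν)) = 0) →
          ∀ mu ∈ alcove n N, c mu = 0) := by
  refine ⟨(gridPolyMatrix n N).det, det_gridPolyMatrix_ne_zero n N,
    fun q t ta hq ht hta hP => ?_⟩
  rw [eval_det_gridPolyMatrix hq ht hta] at hP
  have hunique := eq_zero_of_sum_mul_mono_gridZ_eq_zero (right_ne_zero_of_mul hP)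
  refine ⟨fun cf cg hfg z _ => ?_, hunique⟩
  have hcoeff := hunique (cf - cg) fun ν hν => by
    simp [sub_mul, Finset.sum_sub_distrib, hfg ν hν]
  exact Finset.sum_congr rfl fun μ hμ => by rw [sub_eq_zero.mp (hcoeff μ hμ)]

/-- For generic `q, t, t_a` (i.e. off the zero set of some nonzero polynomial
in these three parameters), every Laurent polynomial in `H_N^{qR} = Span{m_λ : λ ∈ Λ_N}` is
uniquely determined by its values at the grid points `τ q^ν`, `ν ∈ Λ_N`; in particular if
`∑_{μ∈Λ_N} c_μ m_μ(τ q^ν) = 0` for all `ν ∈ Λ_N` then all coefficients `c_μ`, `μ ∈ Λ_N`,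
vanish. -/
theorem statement4 (n N : ℕ) (hn : 1 ≤ n) :
    ∃ P : MvPolynomial (Fin 3) ℂ, P ≠ 0 ∧
      ∀ q t ta : ℂ, q ≠ 0 → t ≠ 0 → ta ≠ 0 →
        MvPolynomial.eval ![q, t, ta] P ≠ 0 →
        (∀ cf cg : (Fin n → ℕ) → ℂ,
          (∀ ν ∈ alcove n N,
            (∑ mu ∈ alcove n N, cf mu * mono mu (gridZ n q t ta ν)) =
              ∑ mu ∈ alcove n N, cg mu * mono mu (gridZ n q t ta ν)) →
          ∀ z : Fin n → ℂ, (∀ i, z i ≠ 0) →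
            (∑ mu ∈ alcove n N, cf mu * mono mu z) =
              ∑ mu ∈ alcove n N, cg mu * mono mu z) ∧
        (∀ c : (Fin n → ℕ) → ℂ,
          (∀ ν ∈ alcove n N, (∑ mu ∈ alcove n N, c mu * mono mu (gridZ n q t ta ν)) = 0) →
          ∀ mu ∈ alcove n N, c mu = 0) :=
  statement4_general n N

end QR
end
end

section
/- For parameters subject to the truncation condition t_a t_b t^{n−1} = q^{−N}, for every ν ∈ Λ_N, every 1 ≤ j ≤ n and ε = ±1: if ν + ε e_j ∉ Λ_N (either because ν + ε e_j fails to be dominant or because its first component exceeds N), then V_{εj}(τ q^{ν}) = 0. -/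
open scoped BigOperators Classical

noncomputable section

namespace QR

/-- For parameters subject to the truncation condition
`t_a t_b t^{n-1} = q^{-N}`: for every `ν ∈ Λ_N`, `1 ≤ j ≤ n` and `ε = ±1`, if `ν + ε e_j`
does not lie in `Λ_N` (either because it fails to be dominant/nonnegative or because its first
component exceeds `N`), then `V_{ε j}(τ q^ν) = 0`. -/
theorem statement18 (n N : ℕ) (hn : 1 ≤ n) (a b : Fin 4) (hab : a ≠ b)
    (q t : ℂ) (T : Fin 4 → ℂ) (hq : q ≠ 0) (ht : t ≠ 0) (hta : T a ≠ 0)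
    (htrunc : T a * T b * t ^ (n - 1) * q ^ N = 1)
    (ν : Fin n → ℕ) (hν : ν ∈ alcove n N) (j : Fin n) (ε : ℤ) (hε : ε = 1 ∨ ε = -1)
    (hout : ¬ ((∀ i k : Fin n, i ≤ k →
          (ν k : ℤ) + (if k = j then ε else 0) ≤ (ν i : ℤ) + (if i = j then ε else 0)) ∧
        (∀ i : Fin n, 0 ≤ (ν i : ℤ) + (if i = j then ε else 0) ∧
          (ν i : ℤ) + (if i = j then ε else 0) ≤ (N : ℤ)))) :
    Vcoef q t T ε j (gridZ n q t (T a) ν) = 0 := by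
  classical
  have hjlt : (j : ℕ) < n := j.isLt
  -- extract dominance and bound facts from the alcove membership
  have halc : isDominant ν ∧ ∀ i, ν i ≤ N := by
    simp only [alcove, Finset.mem_filter, Finset.mem_image, Finset.mem_univ, true_and] at hν
    obtain ⟨⟨w, hw⟩, hd⟩ := hν
    refine ⟨hd, fun i => ?_⟩
    have : (fun i => ((w i : ℕ))) i = ν i := by rw [hw]
    simp only at this
    rw [← this]
    exact Nat.lt_succ_iff.mp (w i).isLt
  obtain ⟨hdom, hbd⟩ := halc
  have hzne : ∀ i, gridZ n q t (T a) ν i ≠ 0 := by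
    intro i
    simp only [gridZ, tauv]
    exact mul_ne_zero (mul_ne_zero (pow_ne_zero _ ht) hta) (pow_ne_zero _ hq)
  suffices hnum : VNum t T ε j (gridZ n q t (T a) ν) = 0 by
    rw [Vcoef, hnum, zero_div]
  set z := gridZ n q t (T a) ν with hz
  rcases hε with rfl | rfl
  · -- ε = 1
    have hcase : ((j : ℕ) = 0 ∧ ν j = N) ∨
        (∃ hj : 0 < (j : ℕ), ν ⟨(j : ℕ) - 1, by omega⟩ = ν j) := by
      rw [not_and_or] at hout
      have key : ∃ i : Fin n, (i : ℕ) < (j : ℕ) ∧ ν i = ν j ∨ ν j = N := by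
        rcases hout with h | h
        · push_neg at h
          obtain ⟨i, k, hik, hlt⟩ := h
          have hd := hdom i k hik
          by_cases hkj : k = j
          · subst hkj
            by_cases hij : i = k
            · subst hij; simp at hlt
            · have hikv : (i : ℕ) < (k : ℕ) :=
                lt_of_le_of_ne hik (fun hh => hij (Fin.ext hh))
              simp only [if_pos rfl, if_neg hij] at hlt
              exact ⟨i, Or.inl ⟨hikv, by omega⟩⟩
          · exfalso
            simp only [if_neg hkj] at hlt
            split_ifs at hlt <;> omega
        · push_neg at h
          obtain ⟨i, hi⟩ := h
          have hbi := hbd i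
          by_cases hij : i = j
          · subst hij
            simp only [if_pos rfl] at hi
            have h1 := hi (by omega)
            exact ⟨i, Or.inr (by omega)⟩
          · exfalso
            simp only [if_neg hij] at hi
            have h1 := hi (by omega)
            omega
      obtain ⟨i, hi⟩ := key
      by_cases hj0 : (j : ℕ) = 0
      · rcases hi with ⟨hlt, _⟩ | hN
        · omega
        · exact Or.inl ⟨hj0, hN⟩
      · have hj : 0 < (j : ℕ) := Nat.pos_of_ne_zero hj0
        refine Or.inr ⟨hj, ?_⟩
        set jp : Fin n := ⟨(j : ℕ) - 1, by omega⟩ with hjp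
        have hjpv : (jp : ℕ) = (j : ℕ) - 1 := rfl
        have h1 : ν j ≤ ν jp := hdom jp j (by simp only [Fin.le_def]; omega)
        rcases hi with ⟨hlt, heq⟩ | hN
        · have h2 : ν jp ≤ ν i := hdom i jp (by simp only [Fin.le_def]; omega)
          omega
        · have := hbd jp
          omega
    rcases hcase with ⟨hj0, hjN⟩ | ⟨hj, heq⟩
    · -- first coordinate equals N : the factor with r = b vanishes
      apply mul_eq_zero_of_left
      apply Finset.prod_eq_zero (Finset.mem_univ b)
      have h1 : n - 1 - (j : ℕ) = n - 1 := by omega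
      have hzj : z j = t ^ (n - 1) * T a * q ^ N := by
        simp only [hz, gridZ, tauv, h1, hjN]
      rw [zpow_one, hzj]
      have h2 : T b * (t ^ (n - 1) * T a * q ^ N) = T a * T b * t ^ (n - 1) * q ^ N := by ring
      rw [h2, htrunc, sub_self]
    · -- ν_{j-1} = ν_j : the factor with k = j-1 vanishes
      set jp : Fin n := ⟨(j : ℕ) - 1, by omega⟩ with hjp
      apply mul_eq_zero_of_right
      apply Finset.prod_eq_zero (i := jp)
      · refine Finset.mem_erase.mpr ⟨?_, Finset.mem_univ _⟩
        simp only [hjp, Fin.ne_iff_vne]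
        omega
      · apply mul_eq_zero_of_right
        rw [zpow_one]
        have hkey : t * z j * (z jp)⁻¹ = 1 := by
          rw [mul_inv_eq_one₀ (hzne jp)]
          simp only [hz, gridZ, tauv]
          rw [heq]
          have hp : t ^ (n - 1 - ((j : ℕ) - 1)) = t * t ^ (n - 1 - (j : ℕ)) := by
            rw [← pow_succ']
            congr 1
            omega
          rw [hp]; ring
        rw [hkey, sub_self]
  · -- ε = -1
    have hcase : ((j : ℕ) = n - 1 ∧ ν j = 0) ∨
        (∃ hj : (j : ℕ) + 1 < n, ν ⟨(j : ℕ) + 1, by omega⟩ = ν j) := by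
      rw [not_and_or] at hout
      have key : ∃ k : Fin n, (j : ℕ) < (k : ℕ) ∧ ν k = ν j ∨ ν j = 0 := by
        rcases hout with h | h
        · push_neg at h
          obtain ⟨i, k, hik, hlt⟩ := h
          have hd := hdom i k hik
          by_cases hij : i = j
          · subst hij
            by_cases hkj : k = i
            · subst hkj; simp at hlt
            · have hikv : (i : ℕ) < (k : ℕ) :=
                lt_of_le_of_ne hik (fun hh => hkj (Fin.ext hh.symm))
              simp only [if_pos rfl, if_neg hkj] at hlt
              exact ⟨k, Or.inl ⟨hikv, by omega⟩⟩
          · exfalso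
            simp only [if_neg hij] at hlt
            split_ifs at hlt <;> omega
        · push_neg at h
          obtain ⟨i, hi⟩ := h
          have hbi := hbd i
          by_cases hij : i = j
          · subst hij
            simp only [if_pos rfl] at hi
            by_cases h0 : ν i = 0
            · exact ⟨i, Or.inr h0⟩
            · exfalso
              have h1 := hi (by omega)
              omega
          · exfalso
            simp only [if_neg hij] at hi
            have h1 := hi (by omega)
            omega
      obtain ⟨k, hk⟩ := key
      by_cases hjn : (j : ℕ) = n - 1
      · rcases hk with ⟨hlt, _⟩ | h0
        · exfalso; have := k.isLt; omega
        · exact Or.inl ⟨hjn, h0⟩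
      · have hj : (j : ℕ) + 1 < n := by omega
        refine Or.inr ⟨hj, ?_⟩
        set js : Fin n := ⟨(j : ℕ) + 1, hj⟩ with hjs
        have hjsv : (js : ℕ) = (j : ℕ) + 1 := rfl
        have h1 : ν js ≤ ν j := hdom j js (by simp only [Fin.le_def]; omega)
        rcases hk with ⟨hlt, heq⟩ | h0
        · have h2 : ν k ≤ ν js := hdom js k (by simp only [Fin.le_def]; omega)
          omega
        · omega
    rcases hcase with ⟨hjn, hj0⟩ | ⟨hj, heq⟩
    · -- last coordinate equals 0 : the factor with r = a vanishes
      apply mul_eq_zero_of_left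
      apply Finset.prod_eq_zero (Finset.mem_univ a)
      have h1 : n - 1 - (j : ℕ) = 0 := by omega
      have hzj : z j = T a := by
        simp only [hz, gridZ, tauv, h1, hj0, pow_zero, one_mul, mul_one]
      rw [zpow_neg_one, hzj, mul_inv_cancel₀ hta, sub_self]
    · -- ν_{j+1} = ν_j : the factor with k = j+1 vanishes
      set js : Fin n := ⟨(j : ℕ) + 1, hj⟩ with hjs
      apply mul_eq_zero_of_right
      apply Finset.prod_eq_zero (i := js)
      · refine Finset.mem_erase.mpr ⟨?_, Finset.mem_univ _⟩
        simp only [hjs, Fin.ne_iff_vne]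
        omega
      · apply mul_eq_zero_of_left
        rw [zpow_neg_one]
        have hkey : t * (z j)⁻¹ * z js = 1 := by
          have hcomm : t * (z j)⁻¹ * z js = t * z js * (z j)⁻¹ := by ring
          rw [hcomm, mul_inv_eq_one₀ (hzne j)]
          simp only [hz, gridZ, tauv]
          rw [heq]
          have hp : t ^ (n - 1 - (j : ℕ)) = t * t ^ (n - 1 - ((j : ℕ) + 1)) := by
            rw [← pow_succ']
            congr 1
            omega
          rw [hp]; ring
        rw [hkey, sub_self]

end QR
end
end
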